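/- arXiv:2306.11424 — 2 statements merged into one kernel-verified Lean document; each statement's English description precedes it below -/
import Mathlib

section
/- With the stochastic Galerkin projection Â_{ij} = ∫_M A(μ) Φ_i(μ) Φ_j(μ) ρ(μ) dμ as above, if additionally the functions Φ_1,…,Φ_s are linearly independent in L²(M,ρ) and A(μ) is symmetric positive definite for almost all μ, then the block matrix is symmetric positive definite. -/
/-!
The quadratic form of the Galerkin matrix is the integral of the pointwise quadratic forms
`x ⬝ᵥ G(μ) x = v(μ) ⬝ᵥ A(μ) v(μ)`, where `v(μ)_k = ∑ᵢ Φᵢ(μ) x(i,k)`. This is a.e. nonnegative, so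
its integral vanishes only if it vanishes a.e.; positive definiteness of `A(μ)` then forces
`v = 0` a.e., and linear independence of the `Φᵢ` forces `x = 0`.
-/

open MeasureTheory Matrix

section IntegralMatrix

variable {M m : Type*} [MeasurableSpace M] {P : Measure M} {F : M → Matrix m m ℝ}

theorem isHermitian_integral (hF : ∀ᵐ μ ∂P, (F μ).IsHermitian) :
    (of fun p q => ∫ μ, F μ p q ∂P).IsHermitian := by
  ext p q
  refine integral_congr_ae ?_
  filter_upwards [hF] with μ hμ using hμ.apply p q

variable [Fintype m]

theorem integrable_dotProduct_mulVec (hF : ∀ p q, Integrable (fun μ => F μ p q) P)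
    (x : m → ℝ) : Integrable (fun μ => x ⬝ᵥ F μ *ᵥ x) P :=
  integrable_finsetSum _ fun p _ =>
    (integrable_finsetSum _ fun q _ => (hF p q).mul_const (x q)).const_mul (x p)

theorem dotProduct_integral_mulVec (hF : ∀ p q, Integrable (fun μ => F μ p q) P)
    (x : m → ℝ) :
    x ⬝ᵥ of (fun p q => ∫ μ, F μ p q ∂P) *ᵥ x = ∫ μ, x ⬝ᵥ F μ *ᵥ x ∂P := by
  have hrow : ∀ p, Integrable (fun μ => ∑ q, F μ p q * x q) P := fun p =>
    integrable_finsetSum _ fun q _ => (hF p q).mul_const (x q)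
  simp only [dotProduct, mulVec, of_apply]
  rw [integral_finsetSum _ fun p _ => (hrow p).const_mul (x p)]
  refine Finset.sum_congr rfl fun p _ => ?_
  rw [integral_const_mul, integral_finsetSum _ fun q _ => (hF p q).mul_const (x q)]
  simp only [integral_mul_const]

theorem posDef_integral (hF : ∀ p q, Integrable (fun μ => F μ p q) P)
    (hpsd : ∀ᵐ μ ∂P, (F μ).PosSemidef)
    (hker : ∀ x, (∀ᵐ μ ∂P, x ⬝ᵥ F μ *ᵥ x = 0) → x = 0) :
    (of fun p q => ∫ μ, F μ p q ∂P).PosDef := by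
  refine posDef_iff_dotProduct_mulVec.mpr
    ⟨isHermitian_integral (hpsd.mono fun _ h => h.isHermitian), fun x hx => ?_⟩
  have hnonneg : 0 ≤ᵐ[P] fun μ => x ⬝ᵥ F μ *ᵥ x := by
    filter_upwards [hpsd] with μ hμ using hμ.dotProduct_mulVec_nonneg x
  rw [star_trivial, dotProduct_integral_mulVec hF]
  refine (integral_nonneg_of_ae hnonneg).lt_of_ne fun hzero => hx (hker x ?_)
  exact (integral_eq_zero_iff_of_nonneg_ae hnonneg
    (integrable_dotProduct_mulVec hF x)).mp hzero.symm

end IntegralMatrix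

section Galerkin

variable {ι κ : Type*} [Fintype ι] [Fintype κ]

/-- The block index comes first in `ι × κ`: block `(i, j)` is `φ i * φ j • B`. -/
def galerkinMatrix (B : Matrix κ κ ℝ) (φ : ι → ℝ) : Matrix (ι × κ) (ι × κ) ℝ :=
  of fun p q => B p.2 q.2 * φ p.1 * φ q.1

theorem dotProduct_galerkinMatrix_mulVec (B : Matrix κ κ ℝ) (φ : ι → ℝ) (x : ι × κ → ℝ) :
    x ⬝ᵥ galerkinMatrix B φ *ᵥ x
      = (φ ᵥ* of (Function.curry x)) ⬝ᵥ B *ᵥ (φ ᵥ* of (Function.curry x)) := by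
  simp only [galerkinMatrix, dotProduct, mulVec, vecMul, of_apply, Function.curry,
    Fintype.sum_prod_type, Finset.mul_sum, Finset.sum_mul]
  rw [Finset.sum_comm]
  refine Finset.sum_congr rfl fun k _ => ?_
  calc _ = ∑ i, ∑ l, ∑ j, x (i, k) * (B k l * φ i * φ j * x (j, l)) :=
        Finset.sum_congr rfl fun i _ => Finset.sum_comm
    _ = ∑ l, ∑ i, ∑ j, x (i, k) * (B k l * φ i * φ j * x (j, l)) := Finset.sum_comm
    _ = _ := Finset.sum_congr rfl fun l _ => by
        rw [Finset.sum_comm]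
        refine Finset.sum_congr rfl fun j _ => Finset.sum_congr rfl fun i _ => ?_
        ring

theorem posSemidef_galerkinMatrix {B : Matrix κ κ ℝ} (hB : B.PosSemidef) (φ : ι → ℝ) :
    (galerkinMatrix B φ).PosSemidef := by
  refine posSemidef_iff_dotProduct_mulVec.mpr ⟨?_, fun x => ?_⟩
  · ext p q
    simp only [galerkinMatrix, conjTranspose_apply, of_apply, star_trivial]
    rw [← hB.isHermitian.apply q.2 p.2, star_trivial]
    ring
  · rw [star_trivial, dotProduct_galerkinMatrix_mulVec]
    simpa using hB.dotProduct_mulVec_nonneg (φ ᵥ* of (Function.curry x))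

theorem eq_zero_of_dotProduct_galerkinMatrix_mulVec_eq_zero {B : Matrix κ κ ℝ} (hB : B.PosDef)
    {φ : ι → ℝ} {x : ι × κ → ℝ} (hx : x ⬝ᵥ galerkinMatrix B φ *ᵥ x = 0) :
    φ ᵥ* of (Function.curry x) = 0 := by
  by_contra hv
  have := hB.dotProduct_mulVec_pos hv
  rw [star_trivial, ← dotProduct_galerkinMatrix_mulVec, hx] at this
  exact this.false

end Galerkin

theorem galerkin_posDef_general
    {M : Type*} [MeasurableSpace M] (P : Measure M)
    {n s : ℕ} (A : M → Matrix (Fin n) (Fin n) ℝ) (Φ : Fin s → M → ℝ)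
    (hint : ∀ i j k l, Integrable (fun μ => A μ k l * Φ i μ * Φ j μ) P)
    (hA : ∀ᵐ μ ∂P, (A μ).PosDef)
    (hli : ∀ c : Fin s → ℝ, (∀ᵐ μ ∂P, ∑ i, c i * Φ i μ = 0) → ∀ i, c i = 0) :
    Matrix.PosDef
      (Matrix.of (fun p q : Fin s × Fin n =>
        ∫ μ, A μ p.2 q.2 * Φ p.1 μ * Φ q.1 μ ∂P)) := by
  refine posDef_integral (F := fun μ => galerkinMatrix (A μ) (Φ · μ))
    (fun p q => hint p.1 q.1 p.2 q.2)
    (hA.mono fun μ hμ => posSemidef_galerkinMatrix hμ.posSemidef _) fun x hx => ?_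
  have hv : ∀ᵐ μ ∂P, (Φ · μ) ᵥ* of (Function.curry x) = 0 := by
    filter_upwards [hA, hx] with μ hAμ hxμ using
      eq_zero_of_dotProduct_galerkinMatrix_mulVec_eq_zero hAμ hxμ
  funext p
  refine hli (fun i => x (i, p.2)) ?_ p.1
  filter_upwards [hv] with μ hμ
  simpa [vecMul, dotProduct, mul_comm] using congrFun hμ p.2

/-- Stochastic Galerkin projection of an a.e. symmetric positive definite
matrix-valued function is symmetric positive definite, provided the basis
functions are linearly independent in L². -/
theorem galerkin_posDef
    {M : Type*} [MeasurableSpace M] (P : Measure M) [IsProbabilityMeasure P]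
    {n s : ℕ} (A : M → Matrix (Fin n) (Fin n) ℝ) (Φ : Fin s → M → ℝ)
    (hAmeas : ∀ k l, Measurable (fun μ => A μ k l))
    (hΦmeas : ∀ i, Measurable (Φ i))
    (hint : ∀ i j k l, Integrable (fun μ => A μ k l * Φ i μ * Φ j μ) P)
    (hA : ∀ᵐ μ ∂P, (A μ).PosDef)
    (hli : ∀ c : Fin s → ℝ, (∀ᵐ μ ∂P, ∑ i, c i * Φ i μ = 0) → ∀ i, c i = 0) :
    Matrix.PosDef
      (Matrix.of (fun p q : Fin s × Fin n =>
        ∫ μ, A μ p.2 q.2 * Φ p.1 μ * Φ q.1 μ ∂P)) :=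
  galerkin_posDef_general P A Φ hint hA hli
end

section
/- Let E, J, R, Q ∈ ℝ^{n×n} with J skew-symmetric, EᵀQ symmetric positive definite, QᵀRQ symmetric positive definite, and E, Q invertible. Then every eigenvalue of the matrix pencil λE − (J−R)Q (equivalently of E⁻¹(J−R)Q) has strictly negative real part, i.e., the pH system E ẋ = (J−R)Qx is asymptotically stable. -/
/-!
Left-multiplying the pencil by `Qᵀ` turns it into `λ A - (K - P)` with `A = QᵀE` and
`P = QᵀRQ` positive definite and `K = QᵀJQ` skew-symmetric. For a null vector `v` of that
pencil, `λ ⟪v, Av⟫ = ⟪v, Kv⟫ - ⟪v, Pv⟫`, where `⟪v, Av⟫` and `⟪v, Pv⟫` are positive reals and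
`⟪v, Kv⟫` is purely imaginary; taking real parts gives `Re λ < 0`.
-/

open Matrix

open scoped ComplexOrder

namespace Matrix

variable {n 𝕜 : Type*} [Fintype n] [RCLike 𝕜]

theorem re_star_dotProduct_map_algebraMap_mulVec (M : Matrix n n ℝ) (v : n → 𝕜) :
    RCLike.re (star v ⬝ᵥ M.map (algebraMap ℝ 𝕜) *ᵥ v) =
      (fun i ↦ RCLike.re (v i)) ⬝ᵥ M *ᵥ (fun i ↦ RCLike.re (v i)) +
        (fun i ↦ RCLike.im (v i)) ⬝ᵥ M *ᵥ (fun i ↦ RCLike.im (v i)) := by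
  simp only [dotProduct, mulVec, map_apply, Pi.star_apply, Finset.mul_sum, map_sum,
    ← Finset.sum_add_distrib]
  refine Finset.sum_congr rfl fun i _ ↦ Finset.sum_congr rfl fun j _ ↦ ?_
  simp only [RCLike.mul_re, RCLike.mul_im, RCLike.star_def, RCLike.conj_re, RCLike.conj_im,
    RCLike.algebraMap_eq_ofReal, RCLike.ofReal_re, RCLike.ofReal_im]
  ring

theorem PosDef.map_algebraMap {M : Matrix n n ℝ} (hM : M.PosDef) :
    (M.map (algebraMap ℝ 𝕜)).PosDef := by
  have hherm : (M.map (algebraMap ℝ 𝕜)).IsHermitian := hM.isHermitian.map _ fun x ↦ by simp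
  refine .of_dotProduct_mulVec_pos hherm fun v hv ↦
    RCLike.pos_iff.2 ⟨?_, hherm.im_star_dotProduct_mulVec_self v⟩
  have hnonneg (x : n → ℝ) : 0 ≤ x ⬝ᵥ M *ᵥ x := by
    simpa using hM.posSemidef.dotProduct_mulVec_nonneg x
  have hpos {x : n → ℝ} (hx : x ≠ 0) : 0 < x ⬝ᵥ M *ᵥ x := by
    simpa using hM.dotProduct_mulVec_pos hx
  rw [re_star_dotProduct_map_algebraMap_mulVec]
  by_cases hre : (fun i ↦ RCLike.re (v i)) = 0
  · have him : (fun i ↦ RCLike.im (v i)) ≠ 0 := fun him ↦ hv <| funext fun i ↦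
      RCLike.ext (by simpa using congrFun hre i) (by simpa using congrFun him i)
    exact add_pos_of_nonneg_of_pos (hnonneg _) (hpos him)
  · exact add_pos_of_pos_of_nonneg (hpos hre) (hnonneg _)

theorem re_star_dotProduct_mulVec_eq_zero_of_conjTranspose_eq_neg {K : Matrix n n 𝕜}
    (hK : Kᴴ = -K) (v : n → 𝕜) : RCLike.re (star v ⬝ᵥ K *ᵥ v) = 0 := by
  have hconj : star (star v ⬝ᵥ K *ᵥ v) = -(star v ⬝ᵥ K *ᵥ v) := by
    rw [← star_dotProduct_star, star_star, star_mulVec, ← dotProduct_mulVec, hK, neg_mulVec,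
      dotProduct_neg]
  have hre := congrArg RCLike.re hconj
  rw [RCLike.star_def, RCLike.conj_re, map_neg] at hre
  linarith

theorem re_lt_zero_of_det_smul_sub_sub_eq_zero [DecidableEq n] {A K P : Matrix n n 𝕜}
    (hA : A.PosDef) (hK : Kᴴ = -K) (hP : P.PosDef) {lam : 𝕜}
    (hlam : (lam • A - (K - P)).det = 0) : RCLike.re lam < 0 := by
  obtain ⟨v, hv, hker⟩ := exists_mulVec_eq_zero_iff.2 hlam
  rw [sub_mulVec, smul_mulVec, sub_eq_zero] at hker
  have hquad : lam * (star v ⬝ᵥ A *ᵥ v) = star v ⬝ᵥ K *ᵥ v - star v ⬝ᵥ P *ᵥ v := by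
    rw [← dotProduct_sub, ← sub_mulVec, ← hker, dotProduct_smul, smul_eq_mul]
  obtain ⟨hA_re, hA_im⟩ := RCLike.pos_iff.1 (hA.dotProduct_mulVec_pos hv)
  have hP_re := (RCLike.pos_iff.1 (hP.dotProduct_mulVec_pos hv)).1
  have hre := congrArg RCLike.re hquad
  rw [RCLike.mul_re, hA_im, mul_zero, sub_zero, map_sub,
    re_star_dotProduct_mulVec_eq_zero_of_conjTranspose_eq_neg hK, zero_sub] at hre
  nlinarith

end Matrix

theorem pH_asymptotic_stability_general {n : ℕ} (E J R Q : Matrix (Fin n) (Fin n) ℝ)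
    (hJ : Jᵀ = -J) (hEQ : (Eᵀ * Q).PosDef) (hR : (Qᵀ * R * Q).PosDef)
    (lam : ℂ)
    (hlam : (lam • E.map (algebraMap ℝ ℂ)
      - ((J - R) * Q).map (algebraMap ℝ ℂ)).det = 0) :
    lam.re < 0 := by
  have hQE : (Qᵀ * E).PosDef := by simpa using hEQ.transpose
  have hQJQ : ((Qᵀ * J * Q).map (algebraMap ℝ ℂ))ᴴ = -(Qᵀ * J * Q).map (algebraMap ℝ ℂ) := by
    have hskew : (Qᵀ * J * Q)ᵀ = -(Qᵀ * J * Q) := by simp [hJ, Matrix.mul_assoc]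
    rw [← conjTranspose_map _ fun x ↦ by simp, conjTranspose_eq_transpose_of_trivial, hskew,
      Matrix.map_neg _ (map_neg _)]
  have hpencil : Qᵀ.map (algebraMap ℝ ℂ) * (lam • E.map (algebraMap ℝ ℂ)
        - ((J - R) * Q).map (algebraMap ℝ ℂ)) =
      lam • (Qᵀ * E).map (algebraMap ℝ ℂ) -
        ((Qᵀ * J * Q).map (algebraMap ℝ ℂ) - (Qᵀ * R * Q).map (algebraMap ℝ ℂ)) := by
    simp only [← RingHom.mapMatrix_apply, map_mul, map_sub]
    noncomm_ring
  refine re_lt_zero_of_det_smul_sub_sub_eq_zero hQE.map_algebraMap hQJQ hR.map_algebraMap ?_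
  rw [← hpencil, det_mul, hlam, mul_zero]

/-- Asymptotic stability of the pH system E ẋ = (J−R)Qx: with J
skew-symmetric, EᵀQ and QᵀRQ symmetric positive definite, and E, Q
invertible, every eigenvalue of the pencil λE − (J−R)Q has strictly negative
real part. -/
theorem pH_asymptotic_stability {n : ℕ} (E J R Q : Matrix (Fin n) (Fin n) ℝ)
    (hJ : Jᵀ = -J) (hEQ : (Eᵀ * Q).PosDef) (hR : (Qᵀ * R * Q).PosDef)
    (hE : IsUnit E.det) (hQ : IsUnit Q.det)
    (lam : ℂ)
    (hlam : (lam • E.map (algebraMap ℝ ℂ)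
      - ((J - R) * Q).map (algebraMap ℝ ℂ)).det = 0) :
    lam.re < 0 :=
  pH_asymptotic_stability_general E J R Q hJ hEQ hR lam hlam
end
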